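/- Let w, r, s, m ∈ ℕ. If μ(w,r,s) < m ≤ μ(w,r,s+1), then σ(m,w,r) = s + 1. -/
import Mathlib


open scoped BigOperators Classical
open Filter

namespace TandemDup

variable {S : Type} [Fintype S] [DecidableEq S] [Ring S]

/-- A single tandem duplication with window length `k`:
`a = xyz` with `|y| = k` is mapped to `b = xyyz`. -/
def Dup (k : ℕ) (a b : List S) : Prop :=
  ∃ x y z : List S, y.length = k ∧ a = x ++ y ++ z ∧ b = x ++ y ++ y ++ z

/-- `DescN k t x y` : `y` is a `t`-descendant of `x`. -/
def DescN (k : ℕ) : ℕ → List S → List S → Prop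
  | 0, a, b => a = b
  | t + 1, a, b => ∃ c, DescN k t a c ∧ Dup k c b

/-- The set `D^t(x)` of `t`-descendants of `x`. -/
def DSet (k t : ℕ) (x : List S) : Set (List S) := {y | DescN k t x y}

/-- The descendant cone `D^*(x)`. -/
def DStar (k : ℕ) (x : List S) : Set (List S) := ⋃ t : ℕ, DSet k t x

/-- A string of length at least `k` is irreducible if it has no ancestor other than itself. -/
def Irred (k : ℕ) (x : List S) : Prop :=
  k ≤ x.length ∧ ∀ z : List S, x ∈ DStar k z → z = x

/-- The duplication root `rt(y)`: an irreducible ancestor of `y` (unique, by the theory). -/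
noncomputable def rt (k : ℕ) (y : List S) : List S :=
  if h : ∃ x : List S, Irred k x ∧ y ∈ DStar k x then h.choose else y

/-- The (non-anchor part of the) discrete derivative `φ̄(x)`. -/
def phiBar (k : ℕ) (x : List S) : List S :=
  (List.range (x.length - k)).map (fun i => x.getD (i + k) 0 - x.getD i 0)

/-- Hamming weight of a string: the number of its nonzero letters. -/
def wtH (l : List S) : ℕ := (l.filter (fun a => decide (a ≠ 0))).length

/-- `w(x) := wt_H(φ̄(x))`. -/
def wgt (k : ℕ) (x : List S) : ℕ := wtH (phiBar k x)

/-- `r(x) := (|x| - |rt(x)|)/k`, the number of duplications taking `rt(x)` to `x`. -/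
noncomputable def rr (k : ℕ) (x : List S) : ℕ := (x.length - (rt k x).length) / k

/-- The typicality condition on the weight `w`. -/
def wTypical (q k n w : ℕ) : Prop :=
  |(w : ℝ) - (((q : ℝ) - 1) / (q : ℝ)) * ((n : ℝ) - (k : ℝ))| < (n : ℝ) ^ ((3 : ℝ) / 4)

/-- The typicality condition on the number of duplications `r`. -/
def rTypical (q k n r : ℕ) : Prop :=
  |(r : ℝ) - (((q : ℝ) - 1) / ((q : ℝ) * ((q : ℝ) ^ k - 1))) * ((n : ℝ) - (k : ℝ))|
    < 2 * (n : ℝ) ^ ((3 : ℝ) / 4)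

/-- The typical set `typ^n`. -/
def typ (k n : ℕ) : Set (List S) :=
  {x | x.length = n ∧ wTypical (Fintype.card S) k n (wgt k x) ∧
    rTypical (Fintype.card S) k n (rr k x)}

/-- The uncertainty `N_t(m, C)`: the maximal size of `⋂ᵢ D^t(xᵢ)` over pairwise
distinct `x₁, …, x_m ∈ C`. -/
noncomputable def Nt (k t m : ℕ) (C : Set (List S)) : ℕ :=
  sSup { N : ℕ | ∃ f : Fin m → List S, Function.Injective f ∧ (∀ i, f i ∈ C) ∧
    N = (⋂ i, DSet k t (f i)).ncard }

/-- `S̄_t(u₁, …, u_m) = ⋂ᵢ {v : v ≥ uᵢ, ‖v - uᵢ‖₁ = t}`. -/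
def Sbar (w t : ℕ) {m : ℕ} (u : Fin m → (Fin (w + 1) → ℕ)) : Set (Fin (w + 1) → ℕ) :=
  ⋂ i, {v | u i ≤ v ∧ ∑ j, (v j - u i j) = t}

/-- `N̄_t(m, w, r)`. -/
noncomputable def Nbar (t m w r : ℕ) : ℕ :=
  sSup { N : ℕ | ∃ u : Fin m → (Fin (w + 1) → ℕ), Function.Injective u ∧
    (∀ i, ∑ j, u i j = r) ∧ N = (Sbar w t u).ncard }

/-- The minimum supremum height `σ(m, w, r)`. -/
noncomputable def sigma (m w r : ℕ) : ℕ :=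
  sInf { s : ℕ | ∃ u : Fin m → (Fin (w + 1) → ℕ), Function.Injective u ∧
    (∀ i, ∑ j, u i j = r) ∧ (∑ j, Finset.univ.sup fun i => u i j) = r + s }

/-- The lower-bounds set `A_r(u)`. -/
def lbs (w r : ℕ) (u : Fin (w + 1) → ℕ) : Set (Fin (w + 1) → ℕ) :=
  {v | (∑ j, v j) = r ∧ v ≤ u}

/-- The maximal lower-bounds-set size `μ(w, r, s)`. -/
noncomputable def mu (w r s : ℕ) : ℕ :=
  sSup { N : ℕ | ∃ u : Fin (w + 1) → ℕ, (∑ j, u j) = r + s ∧ N = (lbs w r u).ncard }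

/-- Twice the distance `d₁`, i.e. the `ℓ₁`-distance `‖u - v‖₁` on `ℕ^{w+1}`. -/
def l1dist {w : ℕ} (u v : Fin (w + 1) → ℕ) : ℕ :=
  ∑ j, ((u j - v j) + (v j - u j))

/-- `N̄_t(m, w, r, d)`. -/
noncomputable def NbarD (t m w r d : ℕ) : ℕ :=
  sSup { N : ℕ | ∃ u : Fin m → (Fin (w + 1) → ℕ),
    (∀ i, ∑ j, u i j = r) ∧ (∀ i j, i ≠ j → 2 * d ≤ l1dist (u i) (u j)) ∧
    N = (Sbar w t u).ncard }

/-- `σ(m, w, r, d)`. -/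
noncomputable def sigmaD (m w r d : ℕ) : ℕ :=
  sInf { s : ℕ | ∃ u : Fin m → (Fin (w + 1) → ℕ),
    (∀ i, ∑ j, u i j = r) ∧ (∀ i j, i ≠ j → 2 * d ≤ l1dist (u i) (u j)) ∧
    (∑ j, Finset.univ.sup fun i => u i j) = r + s }

/-- `μ(w, r, s, d)`. -/
noncomputable def muD (w r s d : ℕ) : ℕ :=
  sSup { N : ℕ | ∃ u : Fin (w + 1) → ℕ, (∑ j, u j) = r + s ∧
    ∃ C : Set (Fin (w + 1) → ℕ), C ⊆ lbs w r u ∧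
      (∀ v₁ ∈ C, ∀ v₂ ∈ C, v₁ ≠ v₂ → 2 * d ≤ l1dist v₁ v₂) ∧ N = C.ncard }

/-- The duplication distance `d(y₁, y₂)`. -/
noncomputable def distDup (k : ℕ) (y₁ y₂ : List S) : ℕ :=
  sInf {t : ℕ | (DSet k t y₁ ∩ DSet k t y₂).Nonempty}

/-- `N^typ_t(m, n, d)`. -/
noncomputable def NtypD (k t m n d : ℕ) : ℕ :=
  sSup { N : ℕ | ∃ f : Fin m → List S, (∀ i, f i ∈ typ k n) ∧
    (∀ i j, i ≠ j → d ≤ distDup k (f i) (f j)) ∧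
    N = (⋂ i, DSet k t (f i)).ncard }

/-- `A(ν, D, ω)`: the maximum size of a binary code of length `ν`, constant Hamming
weight `ω`, and minimum Hamming distance `D`. -/
noncomputable def Abin (ν D ω : ℕ) : ℕ :=
  sSup { N : ℕ | ∃ C : Set (Fin ν → ZMod 2), (∀ x ∈ C, hammingNorm x = ω) ∧
    (∀ x ∈ C, ∀ y ∈ C, x ≠ y → D ≤ hammingDist x y) ∧ N = C.ncard }

/-- Zero-run-length representation: `ψ_x(y)` as a list, mapping `φ̄(y)` written as
`0^{u(1)} a₁ 0^{u(2)} … a_w 0^{u(w+1)}` (with the `aᵢ` nonzero) to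
`(⌊u(1)/k⌋, …, ⌊u(w+1)/k⌋)`. -/
def psiList (k : ℕ) (y : List S) : List ℕ :=
  ((phiBar k y).splitOnP (fun a => decide (a ≠ 0))).map (fun run => run.length / k)

/-- `ψ_x(y)` as a vector in `ℕ^{w+1}`. -/
def psiVec (k w : ℕ) (y : List S) : Fin (w + 1) → ℕ := fun i => (psiList k y).getD i 0

/-- `s = ⌈log_n m⌉`. -/
noncomputable def sExp (n m : ℕ) : ℕ := ⌈Real.logb n m⌉₊

/-- The indicator `δ(m, n)` of Theorem 17. -/
noncomputable def deltaTyp (q k n m : ℕ) : ℕ :=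
  if ∀ r : ℕ, rTypical q k n r → Nat.choose (r + sExp n m) r < m then 1 else 0

/-- `s = ⌈log_n m⌉ + d - 1`. -/
noncomputable def sExpD (n m d : ℕ) : ℕ := sExp n m + (d - 1)

/-- The indicator `δ(m, n, d)` of Theorem 29. -/
noncomputable def deltaEcc (q k d n m : ℕ) : ℕ :=
  if ∀ r : ℕ, rTypical q k n r → Abin (r + sExpD n m d) (2 * d) (sExpD n m d) < m
  then 1 else 0



private lemma lbs_subset_Iic (w r : ℕ) (u : Fin (w + 1) → ℕ) :
    lbs w r u ⊆ Set.Iic (fun _ => r) := by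
  rintro v ⟨hsum, hle⟩
  intro j
  calc v j ≤ ∑ j', v j' :=
        Finset.single_le_sum (fun _ _ => Nat.zero_le _) (Finset.mem_univ j)
    _ = r := hsum

private lemma lbs_finite (w r : ℕ) (u : Fin (w + 1) → ℕ) : (lbs w r u).Finite :=
  (Set.finite_Iic (fun _ => r : Fin (w + 1) → ℕ)).subset (lbs_subset_Iic w r u)

private lemma mu_bdd (w r s : ℕ) : BddAbove
    { N : ℕ | ∃ u : Fin (w + 1) → ℕ, (∑ j, u j) = r + s ∧ N = (lbs w r u).ncard } := by
  refine ⟨(Set.Iic (fun _ => r : Fin (w + 1) → ℕ)).ncard, ?_⟩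
  rintro N ⟨u, hu, rfl⟩
  exact Set.ncard_le_ncard (lbs_subset_Iic w r u) (Set.finite_Iic _)

private lemma exists_inj_of_le_ncard {α : Type*} {C : Set α} (hC : C.Finite) {m : ℕ}
    (hm : m ≤ C.ncard) : ∃ f : Fin m → α, Function.Injective f ∧ ∀ i, f i ∈ C := by
  classical
  rw [Set.ncard_eq_toFinset_card C hC] at hm
  obtain ⟨T, hTsub, hTcard⟩ := Finset.exists_subset_card_eq hm
  refine ⟨fun i => (T.equivFin.symm (Fin.cast hTcard.symm i) : α), ?_, ?_⟩
  · intro a b hab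
    have := T.equivFin.symm.injective (Subtype.ext hab)
    simpa [Fin.ext_iff] using congrArg Fin.val this
  · intro i
    exact (hC.mem_toFinset).1 (hTsub (T.equivFin.symm (Fin.cast hTcard.symm i)).2)

private lemma le_ncard_of_inj {α : Type*} {C : Set α} (hC : C.Finite) {m : ℕ}
    {f : Fin m → α} (hf : Function.Injective f) (hmem : ∀ i, f i ∈ C) :
    m ≤ C.ncard := by
  have h1 : (Set.range f).ncard = m := by
    rw [← Nat.card_coe_set_eq, Nat.card_range_of_injective hf, Nat.card_eq_fintype_card,
      Fintype.card_fin]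
  calc m = (Set.range f).ncard := h1.symm
    _ ≤ C.ncard := Set.ncard_le_ncard (Set.range_subset_iff.2 hmem) hC

theorem statement7 (w r s m : ℕ) (h₁ : mu w r s < m) (h₂ : m ≤ mu w r (s + 1)) :
    sigma m w r = s + 1 := by
  have hm0 : 0 < m := lt_of_le_of_lt (Nat.zero_le _) h₁
  have hne : { N : ℕ | ∃ u : Fin (w + 1) → ℕ, (∑ j, u j) = r + (s + 1) ∧
      N = (lbs w r u).ncard }.Nonempty := by
    by_contra h
    rw [Set.not_nonempty_iff_eq_empty] at h
    rw [mu, h, csSup_empty] at h₂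
    simp only [Nat.bot_eq_zero, Nat.le_zero] at h₂
    exact hm0.ne' h₂
  have hmem := Nat.sSup_mem hne (mu_bdd w r (s + 1))
  obtain ⟨u, husum, hucard⟩ := hmem
  have hmu : m ≤ (lbs w r u).ncard := by rw [← hucard]; exact h₂
  obtain ⟨f, hfinj, hfmem⟩ := exists_inj_of_le_ncard (lbs_finite w r u) hmu
  clear hucard hmu h₂
  -- upper bound: some t ≤ s + 1 is achieved
  have hsumf : ∀ i, (∑ j, f i j) = r := fun i => (hfmem i).1
  have hlow : r ≤ ∑ j, Finset.univ.sup fun i => f i j := by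
    calc r = ∑ j, f ⟨0, hm0⟩ j := (hsumf _).symm
      _ ≤ ∑ j, Finset.univ.sup fun i => f i j :=
        Finset.sum_le_sum fun j _ =>
          Finset.le_sup (f := fun i => f i j) (Finset.mem_univ _)
  have hhigh : (∑ j, Finset.univ.sup fun i => f i j) ≤ r + (s + 1) := by
    calc (∑ j, Finset.univ.sup fun i => f i j) ≤ ∑ j, u j :=
        Finset.sum_le_sum fun j _ => Finset.sup_le fun i _ => (hfmem i).2 j
      _ = r + (s + 1) := husum
  obtain ⟨t, htdef⟩ : ∃ t, (∑ j, Finset.univ.sup fun i => f i j) = r + t :=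
    Nat.exists_eq_add_of_le hlow
  have htle : t ≤ s + 1 := Nat.le_of_add_le_add_left (htdef ▸ hhigh)
  have htmem : t ∈ { s : ℕ | ∃ u : Fin m → (Fin (w + 1) → ℕ), Function.Injective u ∧
      (∀ i, ∑ j, u i j = r) ∧ (∑ j, Finset.univ.sup fun i => u i j) = r + s } :=
    ⟨f, hfinj, hsumf, htdef⟩
  -- lower bound: every achieved t' is ≥ s + 1
  have hlb : ∀ t' ∈ { s : ℕ | ∃ u : Fin m → (Fin (w + 1) → ℕ), Function.Injective u ∧
      (∀ i, ∑ j, u i j = r) ∧ (∑ j, Finset.univ.sup fun i => u i j) = r + s },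
      s + 1 ≤ t' := by
    rintro t' ⟨g, hginj, hgsum, hgsup⟩
    by_contra hlt
    push_neg at hlt
    have ht's : t' ≤ s := Nat.lt_succ_iff.mp hlt
    have hUsum : (∑ j, (fun j => (Finset.univ.sup fun i => g i j) +
        (if j = 0 then s - t' else 0)) j) = r + s := by
      rw [Finset.sum_add_distrib, hgsup, Finset.sum_ite_eq' Finset.univ (0 : Fin (w + 1))]
      simp
      clear h₁ hginj hgsum
      omega
    have hgmem : ∀ i, g i ∈ lbs w r (fun j => (Finset.univ.sup fun i => g i j) +
        (if j = 0 then s - t' else 0)) := by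
      intro i
      refine ⟨hgsum i, fun j => ?_⟩
      calc g i j ≤ Finset.univ.sup fun i => g i j :=
            Finset.le_sup (f := fun i => g i j) (Finset.mem_univ _)
        _ ≤ _ := Nat.le_add_right _ _
    have hcard : m ≤ (lbs w r (fun j => (Finset.univ.sup fun i => g i j) +
        (if j = 0 then s - t' else 0))).ncard :=
      le_ncard_of_inj (lbs_finite w r _) hginj hgmem
    have hle2 : (lbs w r (fun j => (Finset.univ.sup fun i => g i j) +
        (if j = 0 then s - t' else 0))).ncard ≤ mu w r s :=
      le_csSup (mu_bdd w r s) ⟨_, hUsum, rfl⟩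
    exact absurd (hcard.trans hle2) (not_le.mpr h₁)
  have h1 : sigma m w r ≤ t := Nat.sInf_le htmem
  have h2 : s + 1 ≤ sigma m w r := le_csInf ⟨t, htmem⟩ hlb
  have h3 := hlb t htmem
  have ht1 : t = s + 1 := le_antisymm htle h3
  exact le_antisymm (ht1 ▸ h1) h2

end TandemDup
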